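/- arXiv:1901.01099 — 3 statements merged into one kernel-verified Lean document; each statement's English description precedes it below -/
import Mathlib

section
/- For every natural number n ≥ 2, every λ ∈ [−1,1] and every x ∈ [0,1], B_{n,λ}(t²;x) = x² + x(1−x)/n + λ[ (2x − 4x² + 2x^{n+1})/(n(n−1)) + (x^{n+1} + (1−x)^{n+1} − 1)/(n²(n−1)) ], where B_{n,λ}(t²;x) denotes the operator applied to the function t ↦ t². -/
open Finset Filter

/-- Bernstein basis polynomial `b_{n,i}(x) = C(n,i) x^i (1-x)^(n-i)`. -/
noncomputable def bern (n i : ℕ) (x : ℝ) : ℝ :=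
  (n.choose i : ℝ) * x ^ i * (1 - x) ^ (n - i)

/-- Bézier basis `b̃_{n,i}(λ; x)` with shape parameter `lam`. -/
noncomputable def bez (n : ℕ) (lam x : ℝ) (i : ℕ) : ℝ :=
  if i = 0 then bern n 0 x - lam / ((n : ℝ) + 1) * bern (n + 1) 1 x
  else if i = n then bern n n x - lam / ((n : ℝ) + 1) * bern (n + 1) n x
  else bern n i x + lam * (((n : ℝ) - 2 * (i : ℝ) + 1) / ((n : ℝ) ^ 2 - 1) * bern (n + 1) i x
    - ((n : ℝ) - 2 * (i : ℝ) - 1) / ((n : ℝ) ^ 2 - 1) * bern (n + 1) (i + 1) x)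

/-- The λ-Bernstein operator `B_{n,λ}(f; x) = ∑_{i=0}^n f(i/n) b̃_{n,i}(λ; x)`. -/
noncomputable def lB (n : ℕ) (lam : ℝ) (f : ℝ → ℝ) (x : ℝ) : ℝ :=
  ∑ i ∈ Finset.range (n + 1), f ((i : ℝ) / (n : ℝ)) * bez n lam x i

lemma bern_eval (n i : ℕ) (x : ℝ) : (bernsteinPolynomial ℝ n i).eval x = bern n i x := by
  simp [bernsteinPolynomial, bern]

lemma bern_sum (n : ℕ) (x : ℝ) : ∑ i ∈ Finset.range (n+1), bern n i x = 1 := by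
  have h := congrArg (Polynomial.eval x) (bernsteinPolynomial.sum ℝ n)
  simpa [Polynomial.eval_finset_sum, bern_eval] using h

lemma bern_sum_i (n : ℕ) (x : ℝ) :
    ∑ i ∈ Finset.range (n+1), (i:ℝ) * bern n i x = n * x := by
  have h := congrArg (Polynomial.eval x) (bernsteinPolynomial.sum_smul ℝ n)
  simpa [Polynomial.eval_finset_sum, bern_eval] using h

lemma bern_sum_ii (n : ℕ) (x : ℝ) :
    ∑ i ∈ Finset.range (n+1), (i:ℝ) * ((i:ℝ) - 1) * bern n i x = n * (n - 1 : ℕ) * x^2 := by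
  have h := congrArg (Polynomial.eval x) (bernsteinPolynomial.sum_mul_smul ℝ n)
  simp only [Polynomial.eval_finset_sum, nsmul_eq_mul, Polynomial.eval_mul,
    Polynomial.eval_natCast, bern_eval, Polynomial.eval_pow, Polynomial.eval_X] at h
  rw [← Nat.cast_mul, ← h]
  apply Finset.sum_congr rfl
  intro i _
  rcases i with _ | k
  · simp
  · push_cast
    ring

/-- Abel-type summation. -/
lemma abel_sum (f a : ℕ → ℝ) (hf : f 0 = 0) (n : ℕ) (hn : 1 ≤ n) :
    (∑ i ∈ Finset.Ico 1 n, f i * (a i - a (i+1))) + f n * a n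
      = ∑ j ∈ Finset.Ico 1 (n+1), (f j - f (j-1)) * a j := by
  induction n with
  | zero => omega
  | succ m ih =>
    rcases Nat.lt_or_ge 1 (m+1) with h | h
    · have hm : 1 ≤ m := by omega
      rw [Finset.sum_Ico_succ_top hm, Finset.sum_Ico_succ_top (show 1 ≤ m+1 by omega),
        ← ih hm]
      simp only [Nat.add_sub_cancel]
      ring
    · have : m = 0 := by omega
      subst this
      simp [hf]

/-- second moment of the λ-Bernstein operator. -/
theorem lB_second_moment (n : ℕ) (hn : 2 ≤ n) (lam : ℝ)
    (hlam : lam ∈ Set.Icc (-1 : ℝ) 1) (x : ℝ) (hx : x ∈ Set.Icc (0 : ℝ) 1) :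
    lB n lam (fun t => t ^ 2) x =
      x ^ 2 + x * (1 - x) / (n : ℝ) +
        lam * ((2 * x - 4 * x ^ 2 + 2 * x ^ (n + 1)) / ((n : ℝ) * ((n : ℝ) - 1))
          + (x ^ (n + 1) + (1 - x) ^ (n + 1) - 1) / ((n : ℝ) ^ 2 * ((n : ℝ) - 1))) := by
  have hN : (2:ℝ) ≤ (n:ℝ) := by exact_mod_cast hn
  have hN0 : (n:ℝ) ≠ 0 := by linarith
  have hN1 : (n:ℝ) - 1 ≠ 0 := by intro h; nlinarith
  have hN1' : (n:ℝ) + 1 ≠ 0 := by positivity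
  have hD : (n:ℝ)^2 - 1 ≠ 0 := by nlinarith
  set f : ℕ → ℝ := fun i => ((i:ℝ)/(n:ℝ))^2 with hfdef
  set a : ℕ → ℝ := fun j => ((n:ℝ) - 2*(j:ℝ) + 1)/((n:ℝ)^2-1) * bern (n+1) j x with hadef
  set q : ℕ → ℝ := fun j =>
    (-4*(j:ℝ)^2 + 2*((n:ℝ)+2)*(j:ℝ) - ((n:ℝ)+1)) / ((n:ℝ)^2*((n:ℝ)^2-1)) with hqdef
  -- Step 1: split off the correction
  have key : lB n lam (fun t => t ^ 2) x
      = (∑ i ∈ Finset.range (n+1), f i * bern n i x)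
        + lam * ((∑ i ∈ Finset.Ico 1 n, f i * (a i - a (i+1))) + f n * a n) := by
    have hsplit : ∀ g : ℕ → ℝ, ∑ i ∈ Finset.range (n+1), g i
        = g 0 + (∑ i ∈ Finset.Ico 1 n, g i) + g n := by
      intro g
      rw [Finset.range_eq_Ico, Finset.sum_Ico_succ_top (show 0 ≤ n by omega),
        Finset.sum_eq_sum_Ico_succ_bot (show 0 < n by omega)]
    rw [lB]
    rw [hsplit (fun i => ((i:ℝ)/(n:ℝ))^2 * bez n lam x i), hsplit (fun i => f i * bern n i x)]
    have h0 : ((0:ℕ):ℝ)/(n:ℝ) = 0 := by simp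
    have hint : ∑ i ∈ Finset.Ico 1 n, ((i:ℝ)/(n:ℝ))^2 * bez n lam x i
        = ∑ i ∈ Finset.Ico 1 n, (f i * bern n i x + lam * (f i * (a i - a (i+1)))) := by
      apply Finset.sum_congr rfl
      intro i hi
      simp only [Finset.mem_Ico] at hi
      rw [bez, if_neg (by omega), if_neg (by omega)]
      simp only [hfdef, hadef]
      push_cast
      ring
    have hend : ((n:ℕ):ℝ)/(n:ℝ)^1 = 1 := by field_simp
    have hbezn : bez n lam x n = bern n n x + lam * a n := by
      rw [bez, if_neg (by omega), if_pos rfl]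
      simp only [hadef]
      have : ((n:ℝ) - 2*(n:ℝ) + 1)/((n:ℝ)^2-1) = -(1/((n:ℝ)+1)) := by
        rw [div_eq_iff hD]
        field_simp
        ring
      rw [this]
      ring
    rw [hint, Finset.sum_add_distrib, ← Finset.mul_sum, hbezn]
    simp only [h0, hfdef]
    push_cast
    ring
  rw [key, abel_sum f a (by simp [hfdef]) n (by omega)]
  -- Step 2: the plain Bernstein second moment
  have hA : ∑ i ∈ Finset.range (n+1), f i * bern n i x
      = ((n:ℝ) * ((n:ℝ)-1) * x^2 + (n:ℝ)*x)/(n:ℝ)^2 := by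
    have e : ∀ i ∈ Finset.range (n+1), f i * bern n i x
        = ((i:ℝ)*((i:ℝ)-1)*bern n i x + (i:ℝ)*bern n i x)/(n:ℝ)^2 := by
      intro i _
      simp only [hfdef]
      field_simp
      ring
    rw [Finset.sum_congr rfl e, ← Finset.sum_div, Finset.sum_add_distrib,
      bern_sum_ii n x, bern_sum_i n x]
    have : ((n - 1 : ℕ):ℝ) = (n:ℝ) - 1 := by
      rw [Nat.cast_sub (by omega)]; simp
    rw [this]
  -- Step 3: rewrite the Abel sum using q
  have hB : ∑ j ∈ Finset.Ico 1 (n+1), (f j - f (j-1)) * a j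
      = ∑ j ∈ Finset.Ico 1 (n+1), q j * bern (n+1) j x := by
    apply Finset.sum_congr rfl
    intro j hj
    simp only [Finset.mem_Ico] at hj
    have hc : ((j - 1 : ℕ):ℝ) = (j:ℝ) - 1 := by
      rw [Nat.cast_sub (by omega)]; simp
    simp only [hfdef, hadef, hqdef, hc]
    field_simp
    ring
  rw [hB]
  -- Step 4: extend the sum to the full range
  have hext : ∑ j ∈ Finset.Ico 1 (n+1), q j * bern (n+1) j x
      = (∑ j ∈ Finset.range (n+2), q j * bern (n+1) j x)
        - q 0 * bern (n+1) 0 x - q (n+1) * bern (n+1) (n+1) x := by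
    rw [Finset.range_eq_Ico, Finset.sum_eq_sum_Ico_succ_bot (show 0 < n+2 by omega),
      Finset.sum_Ico_succ_top (show 1 ≤ n+1 by omega)]
    ring
  -- Step 5: evaluate the full sum
  have hC : ∑ j ∈ Finset.range (n+2), q j * bern (n+1) j x
      = ((-4)*(((n:ℝ)+1) * (((n+1:ℕ) - 1 : ℕ):ℝ) * x^2) + (2*(n:ℝ))*(((n:ℝ)+1)*x)
          + (-((n:ℝ)+1))*1)/((n:ℝ)^2*((n:ℝ)^2-1)) := by
    have e : ∀ j ∈ Finset.range (n+2), q j * bern (n+1) j x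
        = ((-4) * ((j:ℝ)*((j:ℝ)-1)*bern (n+1) j x) + (2*(n:ℝ)) * ((j:ℝ)*bern (n+1) j x)
            + (-((n:ℝ)+1)) * bern (n+1) j x) / ((n:ℝ)^2*((n:ℝ)^2-1)) := by
      intro j _
      simp only [hqdef]
      ring
    rw [Finset.sum_congr rfl e, ← Finset.sum_div, Finset.sum_add_distrib,
      Finset.sum_add_distrib, ← Finset.mul_sum, ← Finset.mul_sum, ← Finset.mul_sum]
    have h1 := bern_sum_ii (n+1) x
    have h2 := bern_sum_i (n+1) x
    have h3 := bern_sum (n+1) x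
    rw [h1, h2, h3]
    push_cast
    ring
  have hb0 : bern (n+1) 0 x = (1-x)^(n+1) := by simp [bern]
  have hbn : bern (n+1) (n+1) x = x^(n+1) := by simp [bern]
  rw [hext, hC, hA, hb0, hbn]
  simp only [hqdef, Nat.add_sub_cancel]
  push_cast
  field_simp
  ring
end

section
/- For every natural number n ≥ 2, every λ ∈ [−1,1] and every x ∈ [0,1], the second central moment of the λ-Bernstein operator satisfies α_n(x) := B_{n,λ}((t − x)²; x) = x(1−x)/n + λ[ (2x − 4x² + 2x^{n+1})/(n(n−1)) + (x^{n+1} + (1−x)^{n+1} − 1)/(n²(n−1)) − 2x(1 − 2x + x^{n+1} − (1−x)^{n+1})/(n(n−1)) ]. -/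
open Finset Filter

/-!
Writing `u_k = (n - 2k + 1)/(n² - 1) b_{n+1,k}` for `1 ≤ k ≤ n` and `u_0 = u_{n+1} = 0`, the Bézier
basis is `b̃_{n,i} = b_{n,i} + λ (u_i - u_{i+1})`. Summation by parts therefore gives
`B_{n,λ} f = B_n f + λ ∑_{k=1}^n (f(k/n) - f((k-1)/n)) u_k`. For `f(t) = (t - x)²` the first term is
the classical variance `x(1-x)/n`, and the first differences of `f` times the coefficient of `u_k`
form a quadratic in `k`; its sum against `b_{n+1,k}` over `1 ≤ k ≤ n` is the full sum, computed
from the first two moments of the degree-`n+1` Bernstein basis, minus the two boundary terms,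
which produce the powers `x^{n+1}` and `(1-x)^{n+1}`.
-/

lemma bern_eq_eval_bernsteinPolynomial (m k : ℕ) (x : ℝ) :
    bern m k x = (bernsteinPolynomial ℝ m k).eval x := by
  simp [bern, bernsteinPolynomial]

lemma sum_bern (m : ℕ) (x : ℝ) : ∑ k ∈ range (m + 1), bern m k x = 1 := by
  simpa [Polynomial.eval_finsetSum, bern_eq_eval_bernsteinPolynomial] using
    congrArg (Polynomial.eval x) (bernsteinPolynomial.sum ℝ m)

lemma sum_natCast_mul_bern (m : ℕ) (x : ℝ) :
    ∑ k ∈ range (m + 1), (k : ℝ) * bern m k x = m * x := by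
  simpa [Polynomial.eval_finsetSum, bern_eq_eval_bernsteinPolynomial] using
    congrArg (Polynomial.eval x) (bernsteinPolynomial.sum_smul ℝ m)

lemma natCast_mul_natCast_sub_one (k : ℕ) : (k : ℝ) * ((k - 1 : ℕ) : ℝ) = (k : ℝ) ^ 2 - k := by
  rcases Nat.eq_zero_or_pos k with rfl | hk
  · simp
  · push_cast [Nat.cast_sub hk]; ring

lemma sum_natCast_sq_mul_bern (m : ℕ) (x : ℝ) :
    ∑ k ∈ range (m + 1), (k : ℝ) ^ 2 * bern m k x = m * x * (1 - x) + (m * x) ^ 2 := by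
  have hfalling : ∑ k ∈ range (m + 1), ((k : ℝ) ^ 2 - k) * bern m k x
      = ((m : ℝ) ^ 2 - m) * x ^ 2 := by
    simpa [Polynomial.eval_finsetSum, bern_eq_eval_bernsteinPolynomial, natCast_mul_natCast_sub_one]
      using congrArg (Polynomial.eval x) (bernsteinPolynomial.sum_mul_smul ℝ m)
  simp only [sub_mul, sum_sub_distrib, sum_natCast_mul_bern] at hfalling
  linear_combination hfalling

lemma sum_quadratic_mul_bern (m : ℕ) (a b c x : ℝ) :
    ∑ k ∈ range (m + 1), (a * (k : ℝ) ^ 2 + b * k + c) * bern m k x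
      = a * (m * x * (1 - x) + (m * x) ^ 2) + b * (m * x) + c := by
  simp only [add_mul, mul_assoc, sum_add_distrib, ← mul_sum, sum_natCast_sq_mul_bern,
    sum_natCast_mul_bern, sum_bern, mul_one]

lemma sum_sq_div_sub_mul_bern {n : ℕ} (hn : n ≠ 0) (x : ℝ) :
    ∑ k ∈ range (n + 1), ((k : ℝ) / n - x) ^ 2 * bern n k x = x * (1 - x) / n := by
  have hn' : (n : ℝ) ≠ 0 := Nat.cast_ne_zero.mpr hn
  have hexpand : ∀ k : ℕ, ((k : ℝ) / n - x) ^ 2 = 1 / n ^ 2 * (k : ℝ) ^ 2 + (-2 * x / n) * k + x ^ 2 :=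
    fun k => by field_simp; ring
  simp only [hexpand, sum_quadratic_mul_bern]
  field_simp
  ring

lemma bern_zero (m : ℕ) (x : ℝ) : bern m 0 x = (1 - x) ^ m := by
  simp [bern]

lemma bern_self (m : ℕ) (x : ℝ) : bern m m x = x ^ m := by
  simp [bern]

lemma sum_range_mul_bern_succ (m : ℕ) (f : ℕ → ℝ) (x : ℝ) :
    ∑ j ∈ range m, f (j + 1) * bern (m + 1) (j + 1) x
      = ∑ k ∈ range (m + 2), f k * bern (m + 1) k x
        - f 0 * (1 - x) ^ (m + 1) - f (m + 1) * x ^ (m + 1) := by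
  rw [sum_range_succ, sum_range_succ', bern_zero, bern_self]
  ring

lemma sum_mul_sub_eq_sum_sub_mul {R : Type*} [CommRing R] (n : ℕ) (g w : ℕ → R)
    (hw₀ : w 0 = 0) (hw : w (n + 1) = 0) :
    ∑ i ∈ range (n + 1), g i * (w i - w (i + 1))
      = ∑ j ∈ range n, (g (j + 1) - g j) * w (j + 1) := by
  simp only [mul_sub, sub_mul, sum_sub_distrib]
  rw [sum_range_succ' (fun i => g i * w i), sum_range_succ (fun i => g i * w (i + 1)), hw₀, hw]
  ring

noncomputable def bezWeight (n : ℕ) (x : ℝ) (k : ℕ) : ℝ :=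
  if k = 0 ∨ n < k then 0 else ((n : ℝ) - 2 * k + 1) / ((n : ℝ) ^ 2 - 1) * bern (n + 1) k x

lemma bez_eq_bern_add_bezWeight_sub {n i : ℕ} (hn : 2 ≤ n) (hi : i ≤ n) (lam x : ℝ) :
    bez n lam x i = bern n i x + lam * (bezWeight n x i - bezWeight n x (i + 1)) := by
  have hn' : (2 : ℝ) ≤ n := by exact_mod_cast hn
  have hsq : (n : ℝ) ^ 2 - 1 ≠ 0 := by nlinarith
  have hsucc : (n : ℝ) + 1 ≠ 0 := by linarith
  rcases Nat.eq_zero_or_pos i with rfl | hi₀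
  · simp only [bez, bezWeight, if_true, true_or, zero_add, one_ne_zero, false_or,
      show ¬ n < 1 by omega, if_false]
    field_simp
    ring
  rcases hi.eq_or_lt with rfl | hin
  · simp only [bez, bezWeight, hi₀.ne', if_true, if_false, false_or, lt_irrefl,
      show i + 1 ≠ 0 by omega, show i < i + 1 by omega, or_true]
    field_simp
    ring
  · simp only [bez, bezWeight, hi₀.ne', hin.ne, if_false, false_or, not_lt.mpr hi,
      show i + 1 ≠ 0 by omega, show ¬ n < i + 1 by omega]
    push_cast
    ring

lemma sum_mul_bez {n : ℕ} (hn : 2 ≤ n) (lam x : ℝ) (g : ℕ → ℝ) :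
    ∑ i ∈ range (n + 1), g i * bez n lam x i
      = ∑ i ∈ range (n + 1), g i * bern n i x
        + lam * ∑ j ∈ range n, (g (j + 1) - g j) * bezWeight n x (j + 1) := by
  rw [← sum_mul_sub_eq_sum_sub_mul n g (bezWeight n x) (by simp [bezWeight])
    (by simp [bezWeight]), mul_sum, ← sum_add_distrib]
  refine sum_congr rfl fun i hi => ?_
  rw [bez_eq_bern_add_bezWeight_sub hn (Nat.lt_succ_iff.mp (mem_range.mp hi))]
  ring

lemma sum_sq_div_sub_bezWeight {n : ℕ} (hn : 2 ≤ n) (x : ℝ) :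
    ∑ j ∈ range n, ((((j + 1 : ℕ) : ℝ) / n - x) ^ 2 - ((j : ℝ) / n - x) ^ 2)
        * bezWeight n x (j + 1)
      = (2 * x - 4 * x ^ 2 + 2 * x ^ (n + 1)) / ((n : ℝ) * ((n : ℝ) - 1))
          + (x ^ (n + 1) + (1 - x) ^ (n + 1) - 1) / ((n : ℝ) ^ 2 * ((n : ℝ) - 1))
          - 2 * x * (1 - 2 * x + x ^ (n + 1) - (1 - x) ^ (n + 1)) / ((n : ℝ) * ((n : ℝ) - 1)) := by
  have hn' : (2 : ℝ) ≤ n := by exact_mod_cast hn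
  have hn₀ : (n : ℝ) ≠ 0 := by linarith
  have hn₁ : (n : ℝ) - 1 ≠ 0 := by linarith
  have hsq : (n : ℝ) ^ 2 - 1 ≠ 0 := by nlinarith
  set D : ℝ := (n : ℝ) ^ 2 * ((n : ℝ) ^ 2 - 1)
  -- `((k/n - x)² - ((k-1)/n - x)²) (n - 2k + 1)/(n² - 1) = (2k - 1 - 2nx)(n + 1 - 2k)/D`,
  -- expanded in powers of `k`
  set a : ℝ := -4 / D
  set b : ℝ := (2 * n + 4 + 4 * n * x) / D
  set c : ℝ := -((n + 1) * (1 + 2 * n * x)) / D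
  have hterm : ∀ j ∈ range n, ((((j + 1 : ℕ) : ℝ) / n - x) ^ 2 - ((j : ℝ) / n - x) ^ 2)
      * bezWeight n x (j + 1)
        = (a * ((j + 1 : ℕ) : ℝ) ^ 2 + b * ((j + 1 : ℕ) : ℝ) + c) * bern (n + 1) (j + 1) x := by
    intro j hj
    simp only [bezWeight, show j + 1 ≠ 0 by omega, show ¬ n < j + 1 by simp at hj; omega,
      or_self, if_false, a, b, c, D]
    push_cast
    field_simp
    ring
  rw [sum_congr rfl hterm, sum_range_mul_bern_succ n (fun k => a * (k : ℝ) ^ 2 + b * k + c),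
    sum_quadratic_mul_bern]
  simp only [a, b, c, D]
  push_cast
  field_simp
  ring

theorem lB_second_central_moment_general (n : ℕ) (hn : 2 ≤ n) (lam : ℝ) (x : ℝ) :
    lB n lam (fun t => (t - x) ^ 2) x =
      x * (1 - x) / (n : ℝ) +
        lam * ((2 * x - 4 * x ^ 2 + 2 * x ^ (n + 1)) / ((n : ℝ) * ((n : ℝ) - 1))
          + (x ^ (n + 1) + (1 - x) ^ (n + 1) - 1) / ((n : ℝ) ^ 2 * ((n : ℝ) - 1))
          - 2 * x * (1 - 2 * x + x ^ (n + 1) - (1 - x) ^ (n + 1)) / ((n : ℝ) * ((n : ℝ) - 1))) := by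
  rw [lB, sum_mul_bez hn lam x (fun i => ((i : ℝ) / n - x) ^ 2),
    sum_sq_div_sub_mul_bern (by omega), sum_sq_div_sub_bezWeight hn]

/-- second central moment `α_n(x) = B_{n,λ}((t - x)²; x)`. -/
theorem lB_second_central_moment (n : ℕ) (hn : 2 ≤ n) (lam : ℝ)
    (hlam : lam ∈ Set.Icc (-1 : ℝ) 1) (x : ℝ) (hx : x ∈ Set.Icc (0 : ℝ) 1) :
    lB n lam (fun t => (t - x) ^ 2) x =
      x * (1 - x) / (n : ℝ) +
        lam * ((2 * x - 4 * x ^ 2 + 2 * x ^ (n + 1)) / ((n : ℝ) * ((n : ℝ) - 1))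
          + (x ^ (n + 1) + (1 - x) ^ (n + 1) - 1) / ((n : ℝ) ^ 2 * ((n : ℝ) - 1))
          - 2 * x * (1 - 2 * x + x ^ (n + 1) - (1 - x) ^ (n + 1)) / ((n : ℝ) * ((n : ℝ) - 1))) :=
  lB_second_central_moment_general n hn lam x
end

section
/- Let λ ∈ [−1,1], let ρ(x,y) = x² + y² + 1, and let f be a continuous function on I = [0,1]×[0,1] belonging to the weighted space C⁰_ρ, i.e. |f(x,y)| ≤ M_f ρ(x,y) for some constant M_f > 0. Then the bivariate λ-Bernstein operators converge to f in the weighted norm: lim_{n,m→∞} ‖B̄_{n,m}(f; ·,·; λ) − f‖_ρ = 0, where ‖g‖_ρ = sup_{(x,y)∈I} |g(x,y)| / ρ(x,y). -/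
open Finset Filter

/-- The bivariate λ-Bernstein operator
`B̄_{n,m}(f; x, y; λ) = ∑_{k₁=0}^n ∑_{k₂=0}^m f(k₁/n, k₂/m) b̃_{n,k₁}(λ;x) b̃_{m,k₂}(λ;y)`. -/
noncomputable def bivB (n m : ℕ) (lam : ℝ) (f : ℝ → ℝ → ℝ) (x y : ℝ) : ℝ :=
  ∑ k₁ ∈ Finset.range (n + 1), ∑ k₂ ∈ Finset.range (m + 1),
    f ((k₁ : ℝ) / (n : ℝ)) ((k₂ : ℝ) / (m : ℝ)) * bez n lam x k₁ * bez m lam y k₂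

/-!
Since `ρ ≥ 1`, the weighted error is dominated by the uniform error on the square, so it suffices
to prove uniform convergence there.

The λ-correction of the Bézier basis is small in `ℓ¹`: `|b̃_{n,i}(λ;x) - b_{n,i}(x)|` is at most
`(b_{n+1,i}(x) + b_{n+1,i+1}(x)) / (n - 1)`, so `∑ᵢ |b̃_{n,i} - b_{n,i}| ≤ 2 / (n - 1)`. Hence
`B̄_{n,m}(λ)` differs from the classical bivariate Bernstein operator `B̄_{n,m}(0)` by
`O(‖f‖∞ (1/(n-1) + 1/(m-1)))`. For the classical operator, uniform continuity gives
`|f(u,v) - f(x,y)| ≤ ε + 2‖f‖∞ δ⁻² ((u-x)² + (v-y)²)`, and summing against the product weights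
turns the quadratic term into the Bernstein variances `x(1-x)/n + y(1-y)/m`.
-/

open Function Topology

local notation "𝕀" => Set.Icc (0 : ℝ) 1

theorem bern_eq_eval (n i : ℕ) (x : ℝ) : bern n i x = (bernsteinPolynomial ℝ n i).eval x := by
  simp [bern, bernsteinPolynomial]

theorem bern_nonneg {n i : ℕ} {x : ℝ} (hx : x ∈ 𝕀) : 0 ≤ bern n i x := by
  obtain ⟨hx₀, hx₁⟩ := hx
  have : 0 ≤ 1 - x := sub_nonneg.2 hx₁
  unfold bern
  positivity

theorem sum_range_bern (n : ℕ) (x : ℝ) : ∑ i ∈ range (n + 1), bern n i x = 1 := by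
  simpa [Polynomial.eval_finsetSum, bern_eq_eval] using
    congrArg (Polynomial.eval x) (bernsteinPolynomial.sum ℝ n)

theorem sum_range_sq_sub_mul_bern {n : ℕ} (hn : n ≠ 0) (x : ℝ) :
    ∑ i ∈ range (n + 1), ((i : ℝ) / n - x) ^ 2 * bern n i x = x * (1 - x) / n := by
  have hvar : ∑ i ∈ range (n + 1), ((n : ℝ) * x - i) ^ 2 * bern n i x = n * x * (1 - x) := by
    simpa [Polynomial.eval_finsetSum, bern_eq_eval, nsmul_eq_mul] using
      congrArg (Polynomial.eval x) (bernsteinPolynomial.variance ℝ n)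
  have hn' : (n : ℝ) ≠ 0 := by exact_mod_cast hn
  calc ∑ i ∈ range (n + 1), ((i : ℝ) / n - x) ^ 2 * bern n i x
      = (∑ i ∈ range (n + 1), ((n : ℝ) * x - i) ^ 2 * bern n i x) / (n : ℝ) ^ 2 := by
        rw [sum_div]
        refine sum_congr rfl fun i _ => ?_
        field_simp
        ring
    _ = x * (1 - x) / n := by
        rw [hvar]
        field_simp

theorem bez_zero (n : ℕ) (x : ℝ) (i : ℕ) : bez n 0 x i = bern n i x := by
  simp only [bez]
  split_ifs <;> simp_all

theorem abs_mul_sub_mul_le {lam c d p q C : ℝ} (hl : |lam| ≤ 1) (hc : |c| ≤ C) (hd : |d| ≤ C)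
    (hp : 0 ≤ p) (hq : 0 ≤ q) : |lam * (c * p - d * q)| ≤ C * (p + q) :=
  calc |lam * (c * p - d * q)| ≤ |c * p - d * q| := by
        rw [abs_mul]; exact mul_le_of_le_one_left (abs_nonneg _) hl
    _ ≤ |c| * p + |d| * q := by
        simpa [abs_mul, abs_of_nonneg hp, abs_of_nonneg hq] using abs_sub (c * p) (d * q)
    _ ≤ C * (p + q) := by nlinarith

theorem abs_bez_sub_bern_le {n : ℕ} (hn : 2 ≤ n) {lam x : ℝ} (hl : |lam| ≤ 1)
    (hx : x ∈ 𝕀) {i : ℕ} (hi : i ≤ n) :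
    |bez n lam x i - bern n i x|
      ≤ 1 / ((n : ℝ) - 1) * (bern (n + 1) i x + bern (n + 1) (i + 1) x) := by
  have hn' : (2 : ℝ) ≤ n := by exact_mod_cast hn
  have hi' : (i : ℝ) ≤ n := by exact_mod_cast hi
  have hend : |1 / ((n : ℝ) + 1)| ≤ 1 / ((n : ℝ) - 1) := by
    rw [abs_of_pos (by positivity)]
    gcongr <;> linarith
  have hzero : |(0 : ℝ)| ≤ 1 / ((n : ℝ) - 1) := by
    rw [abs_zero]; exact div_nonneg zero_le_one (by linarith)
  have hmid {k : ℝ} (hk : |k| ≤ n + 1) : |k / ((n : ℝ) ^ 2 - 1)| ≤ 1 / ((n : ℝ) - 1) := by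
    rw [abs_div, abs_of_pos (a := (n : ℝ) ^ 2 - 1) (by nlinarith),
      div_le_div_iff₀ (by nlinarith) (by linarith)]
    nlinarith
  have hp := bern_nonneg (n := n + 1) (i := i) hx
  have hq := bern_nonneg (n := n + 1) (i := i + 1) hx
  -- In each case the correction is `lam * (c * b_{n+1,i} - d * b_{n+1,i+1})` with
  -- `|c|, |d| ≤ 1 / (n - 1)`.
  rcases eq_or_ne i 0 with rfl | hi0
  · have h : bez n lam x 0 - bern n 0 x
        = lam * (0 * bern (n + 1) 0 x - 1 / ((n : ℝ) + 1) * bern (n + 1) (0 + 1) x) := by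
      simp [bez]; ring
    rw [h]
    exact abs_mul_sub_mul_le hl hzero hend hp hq
  rcases eq_or_ne i n with rfl | hin
  · have h : bez i lam x i - bern i i x
        = lam * (-(1 / ((i : ℝ) + 1)) * bern (i + 1) i x - 0 * bern (i + 1) (i + 1) x) := by
      simp [bez, hi0]; ring
    rw [h]
    exact abs_mul_sub_mul_le hl (by rwa [abs_neg]) hzero hp hq
  · have h : bez n lam x i - bern n i x
        = lam * (((n : ℝ) - 2 * i + 1) / ((n : ℝ) ^ 2 - 1) * bern (n + 1) i x
          - ((n : ℝ) - 2 * i - 1) / ((n : ℝ) ^ 2 - 1) * bern (n + 1) (i + 1) x) := by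
      simp [bez, hi0, hin]
    rw [h]
    exact abs_mul_sub_mul_le hl (hmid (abs_le.2 ⟨by linarith, by linarith⟩))
      (hmid (abs_le.2 ⟨by linarith, by linarith⟩)) hp hq

theorem sum_abs_bez_sub_bern_le {n : ℕ} (hn : 2 ≤ n) {lam x : ℝ} (hl : |lam| ≤ 1)
    (hx : x ∈ 𝕀) :
    ∑ i ∈ range (n + 1), |bez n lam x i - bern n i x| ≤ 2 / ((n : ℝ) - 1) := by
  have hn' : (2 : ℝ) ≤ n := by exact_mod_cast hn
  have hpairs : ∑ i ∈ range (n + 1), (bern (n + 1) i x + bern (n + 1) (i + 1) x) ≤ 2 := by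
    have h₁ := sum_range_succ (fun i => bern (n + 1) i x) (n + 1)
    have h₂ := sum_range_succ' (fun i => bern (n + 1) i x) (n + 1)
    rw [sum_range_bern] at h₁ h₂
    rw [sum_add_distrib]
    linarith [bern_nonneg (n := n + 1) (i := 0) hx, bern_nonneg (n := n + 1) (i := n + 1) hx]
  calc ∑ i ∈ range (n + 1), |bez n lam x i - bern n i x|
      ≤ ∑ i ∈ range (n + 1), 1 / ((n : ℝ) - 1) * (bern (n + 1) i x + bern (n + 1) (i + 1) x) :=
        sum_le_sum fun i hi =>
          abs_bez_sub_bern_le hn hl hx (Nat.lt_succ_iff.1 (mem_range.1 hi))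
    _ ≤ 1 / ((n : ℝ) - 1) * 2 := by
        rw [← mul_sum]
        exact mul_le_mul_of_nonneg_left hpairs (div_nonneg zero_le_one (by linarith))
    _ = 2 / ((n : ℝ) - 1) := by ring

section TensorSums

variable {ι κ : Type*} {s : Finset ι} {t : Finset κ}

theorem abs_sum_sum_mul_mul_sub_le {a : ι → ℝ} {b : κ → ℝ} (ha : ∀ i ∈ s, 0 ≤ a i)
    (hb : ∀ j ∈ t, 0 ≤ b j) (ha₁ : ∑ i ∈ s, a i = 1) (hb₁ : ∑ j ∈ t, b j = 1)
    {g : ι → κ → ℝ} {c ε K : ℝ} {d : ι → ℝ} {e : κ → ℝ}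
    (hg : ∀ i ∈ s, ∀ j ∈ t, |g i j - c| ≤ ε + K * (d i + e j)) :
    |∑ i ∈ s, ∑ j ∈ t, g i j * a i * b j - c|
      ≤ ε + K * (∑ i ∈ s, d i * a i + ∑ j ∈ t, e j * b j) := by
  have hab : ∑ i ∈ s, ∑ j ∈ t, a i * b j = 1 := by rw [← sum_mul_sum, ha₁, hb₁, mul_one]
  calc |∑ i ∈ s, ∑ j ∈ t, g i j * a i * b j - c|
      = |∑ i ∈ s, ∑ j ∈ t, (g i j - c) * (a i * b j)| := by
        have hsplit : ∑ i ∈ s, ∑ j ∈ t, (g i j - c) * (a i * b j)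
            = ∑ i ∈ s, ∑ j ∈ t, g i j * a i * b j - c * ∑ i ∈ s, ∑ j ∈ t, a i * b j := by
          simp only [sub_mul, sum_sub_distrib, mul_sum, mul_assoc]
        rw [hsplit, hab, mul_one]
    _ ≤ ∑ i ∈ s, ∑ j ∈ t, |g i j - c| * (a i * b j) := by
        refine (abs_sum_le_sum_abs _ _).trans (sum_le_sum fun i hi => ?_)
        refine (abs_sum_le_sum_abs _ _).trans (sum_le_sum fun j hj => ?_)
        rw [abs_mul, abs_of_nonneg (mul_nonneg (ha i hi) (hb j hj))]
    _ ≤ ∑ i ∈ s, ∑ j ∈ t, (ε + K * (d i + e j)) * (a i * b j) := by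
        gcongr with i hi j hj
        · exact mul_nonneg (ha i hi) (hb j hj)
        · exact hg i hi j hj
    _ = ∑ i ∈ s, ∑ j ∈ t,
          (ε * (a i * b j) + K * (d i * a i * b j) + K * (a i * (e j * b j))) :=
        sum_congr rfl fun i _ => sum_congr rfl fun j _ => by ring
    _ = ε * ((∑ i ∈ s, a i) * ∑ j ∈ t, b j) + K * ((∑ i ∈ s, d i * a i) * ∑ j ∈ t, b j)
          + K * ((∑ i ∈ s, a i) * ∑ j ∈ t, e j * b j) := by
        simp only [sum_mul_sum s t, mul_sum, sum_add_distrib]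
    _ = ε + K * (∑ i ∈ s, d i * a i + ∑ j ∈ t, e j * b j) := by
        rw [ha₁, hb₁]; ring

theorem abs_sum_sum_mul_mul_sub_sum_sum_le {g : ι → κ → ℝ} {F : ℝ}
    (hg : ∀ i ∈ s, ∀ j ∈ t, |g i j| ≤ F) (a a' : ι → ℝ) (b b' : κ → ℝ) :
    |∑ i ∈ s, ∑ j ∈ t, g i j * a i * b j - ∑ i ∈ s, ∑ j ∈ t, g i j * a' i * b' j|
      ≤ F * ((∑ i ∈ s, |a i - a' i|) * ∑ j ∈ t, |b j|
        + (∑ i ∈ s, |a' i|) * ∑ j ∈ t, |b j - b' j|) := by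
  rw [← sum_sub_distrib]
  simp_rw [← sum_sub_distrib]
  calc |∑ i ∈ s, ∑ j ∈ t, (g i j * a i * b j - g i j * a' i * b' j)|
      ≤ ∑ i ∈ s, ∑ j ∈ t, F * (|a i - a' i| * |b j| + |a' i| * |b j - b' j|) := by
        refine (abs_sum_le_sum_abs _ _).trans (sum_le_sum fun i hi => ?_)
        refine (abs_sum_le_sum_abs _ _).trans (sum_le_sum fun j hj => ?_)
        have hsplit : g i j * a i * b j - g i j * a' i * b' j
            = g i j * ((a i - a' i) * b j + a' i * (b j - b' j)) := by ring
        rw [hsplit, abs_mul]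
        refine mul_le_mul (hg i hi j hj) ?_ (abs_nonneg _) ((abs_nonneg _).trans (hg i hi j hj))
        simpa only [abs_mul] using abs_add_le ((a i - a' i) * b j) (a' i * (b j - b' j))
    _ = F * ((∑ i ∈ s, |a i - a' i|) * ∑ j ∈ t, |b j|
          + (∑ i ∈ s, |a' i|) * ∑ j ∈ t, |b j - b' j|) := by
        simp only [sum_mul_sum s t, ← sum_add_distrib, mul_sum, mul_add]

end TensorSums

theorem abs_sub_le_add_mul_dist_sq {X : Type*} [PseudoMetricSpace X] {S : Set X} {g : X → ℝ}
    {F ε δ : ℝ} (hδ : 0 < δ) (hg : ∀ z ∈ S, |g z| ≤ F)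
    (hmod : ∀ z ∈ S, ∀ w ∈ S, dist z w ≤ δ → dist (g z) (g w) ≤ ε) {z w : X}
    (hz : z ∈ S) (hw : w ∈ S) :
    |g z - g w| ≤ ε + 2 * F / δ ^ 2 * dist z w ^ 2 := by
  have hε : 0 ≤ ε := (dist_self (g z)).symm.le.trans (hmod z hz z hz (by simpa using hδ.le))
  have hF : 0 ≤ F := (abs_nonneg _).trans (hg z hz)
  rcases le_or_gt (dist z w) δ with hclose | hfar
  · have := hmod z hz w hw hclose
    rw [Real.dist_eq] at this
    nlinarith [sq_nonneg (dist z w), div_nonneg (mul_nonneg zero_le_two hF) (sq_nonneg δ)]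
  · calc |g z - g w| ≤ F + F := (abs_sub _ _).trans (add_le_add (hg z hz) (hg w hw))
      _ = 2 * F / δ ^ 2 * δ ^ 2 := by field_simp; ring
      _ ≤ 2 * F / δ ^ 2 * dist z w ^ 2 := by gcongr
      _ ≤ ε + 2 * F / δ ^ 2 * dist z w ^ 2 := le_add_of_nonneg_left hε

theorem dist_sq_le_sq_add_sq (z w : ℝ × ℝ) :
    dist z w ^ 2 ≤ (z.1 - w.1) ^ 2 + (z.2 - w.2) ^ 2 := by
  rw [Prod.dist_eq, Real.dist_eq, Real.dist_eq]
  rcases le_total |z.1 - w.1| |z.2 - w.2| with h | h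
  · rw [max_eq_right h, sq_abs]; nlinarith
  · rw [max_eq_left h, sq_abs]; nlinarith

theorem natCast_div_mem_Icc {i n : ℕ} (h : i ∈ range (n + 1)) : (i : ℝ) / n ∈ 𝕀 :=
  ⟨by positivity,
    div_le_one_of_le₀ (by exact_mod_cast Nat.lt_succ_iff.1 (mem_range.1 h)) n.cast_nonneg⟩

theorem bivB_zero (n m : ℕ) (f : ℝ → ℝ → ℝ) (x y : ℝ) :
    bivB n m 0 f x y = ∑ i ∈ range (n + 1), ∑ j ∈ range (m + 1),
      f ((i : ℝ) / n) ((j : ℝ) / m) * bern n i x * bern m j y := by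
  simp only [bivB, bez_zero]

section Estimates

variable {f : ℝ → ℝ → ℝ} {F : ℝ} {n m : ℕ} {x y : ℝ}

theorem abs_bivB_zero_sub_le {ε δ : ℝ} (hδ : 0 < δ) (hF : ∀ z ∈ 𝕀 ×ˢ 𝕀, |uncurry f z| ≤ F)
    (hmod : ∀ z ∈ 𝕀 ×ˢ 𝕀, ∀ w ∈ 𝕀 ×ˢ 𝕀, dist z w ≤ δ → dist (uncurry f z) (uncurry f w) ≤ ε)
    (hn : n ≠ 0) (hm : m ≠ 0) (hx : x ∈ 𝕀) (hy : y ∈ 𝕀) :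
    |bivB n m 0 f x y - f x y| ≤ ε + 2 * F / δ ^ 2 * (x * (1 - x) / n + y * (1 - y) / m) := by
  rw [bivB_zero, ← sum_range_sq_sub_mul_bern hn x, ← sum_range_sq_sub_mul_bern hm y]
  refine abs_sum_sum_mul_mul_sub_le (fun i _ => bern_nonneg hx) (fun j _ => bern_nonneg hy)
    (sum_range_bern n x) (sum_range_bern m y) fun i hi j hj => ?_
  have hgrid : ((i : ℝ) / n, (j : ℝ) / m) ∈ 𝕀 ×ˢ 𝕀 :=
    ⟨natCast_div_mem_Icc hi, natCast_div_mem_Icc hj⟩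
  have hK : 0 ≤ 2 * F / δ ^ 2 := by
    have := (abs_nonneg _).trans (hF _ hgrid)
    positivity
  calc |f ((i : ℝ) / n) ((j : ℝ) / m) - f x y|
      ≤ ε + 2 * F / δ ^ 2 * dist ((i : ℝ) / n, (j : ℝ) / m) (x, y) ^ 2 :=
        abs_sub_le_add_mul_dist_sq (w := (x, y)) hδ hF hmod hgrid ⟨hx, hy⟩
    _ ≤ ε + 2 * F / δ ^ 2 * (((i : ℝ) / n - x) ^ 2 + ((j : ℝ) / m - y) ^ 2) := by
        gcongr
        exact dist_sq_le_sq_add_sq _ _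

theorem abs_bivB_sub_bivB_zero_le {lam : ℝ} (hl : |lam| ≤ 1)
    (hF : ∀ z ∈ 𝕀 ×ˢ 𝕀, |uncurry f z| ≤ F) (hn : 2 ≤ n) (hm : 2 ≤ m)
    (hx : x ∈ 𝕀) (hy : y ∈ 𝕀) :
    |bivB n m lam f x y - bivB n m 0 f x y|
      ≤ F * (2 / ((n : ℝ) - 1) * (1 + 2 / ((m : ℝ) - 1)) + 2 / ((m : ℝ) - 1)) := by
  have hgrid : ∀ i ∈ range (n + 1), ∀ j ∈ range (m + 1), |f ((i : ℝ) / n) ((j : ℝ) / m)| ≤ F :=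
    fun i hi j hj => hF ((i : ℝ) / n, (j : ℝ) / m) ⟨natCast_div_mem_Icc hi, natCast_div_mem_Icc hj⟩
  have hF₀ : 0 ≤ F := (abs_nonneg _).trans (hgrid 0 (by simp) 0 (by simp))
  have hn' : (2 : ℝ) ≤ n := by exact_mod_cast hn
  have hSx := sum_abs_bez_sub_bern_le hn hl hx
  have hSy := sum_abs_bez_sub_bern_le hm hl hy
  have hbern_x : ∑ i ∈ range (n + 1), |bern n i x| = 1 := by
    rw [← sum_range_bern n x]
    exact sum_congr rfl fun i _ => abs_of_nonneg (bern_nonneg hx)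
  have hbez_y : ∑ j ∈ range (m + 1), |bez m lam y j| ≤ 1 + 2 / ((m : ℝ) - 1) := by
    calc ∑ j ∈ range (m + 1), |bez m lam y j|
        ≤ ∑ j ∈ range (m + 1), (bern m j y + |bez m lam y j - bern m j y|) :=
          sum_le_sum fun j _ => by
            simpa [abs_of_nonneg (bern_nonneg (n := m) (i := j) hy)] using
              abs_add_le (bern m j y) (bez m lam y j - bern m j y)
      _ ≤ 1 + 2 / ((m : ℝ) - 1) := by rw [sum_add_distrib, sum_range_bern]; linarith
  simp only [bivB, bez_zero]
  refine (abs_sum_sum_mul_mul_sub_sum_sum_le hgrid _ _ _ _).trans ?_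
  rw [hbern_x, one_mul]
  gcongr
  exact div_nonneg zero_le_two (by linarith)

theorem abs_bivB_sub_le {lam ε δ : ℝ} (hl : |lam| ≤ 1) (hδ : 0 < δ)
    (hF : ∀ z ∈ 𝕀 ×ˢ 𝕀, |uncurry f z| ≤ F)
    (hmod : ∀ z ∈ 𝕀 ×ˢ 𝕀, ∀ w ∈ 𝕀 ×ˢ 𝕀, dist z w ≤ δ → dist (uncurry f z) (uncurry f w) ≤ ε)
    (hn : 2 ≤ n) (hm : 2 ≤ m) (hx : x ∈ 𝕀) (hy : y ∈ 𝕀) :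
    |bivB n m lam f x y - f x y|
      ≤ ε + 2 * F / δ ^ 2 * (1 / n + 1 / m)
        + F * (2 / ((n : ℝ) - 1) * (1 + 2 / ((m : ℝ) - 1)) + 2 / ((m : ℝ) - 1)) := by
  have hK : 0 ≤ 2 * F / δ ^ 2 := by
    have := (abs_nonneg _).trans (hF (x, y) ⟨hx, hy⟩)
    positivity
  calc |bivB n m lam f x y - f x y|
      ≤ |bivB n m lam f x y - bivB n m 0 f x y| + |bivB n m 0 f x y - f x y| :=
        abs_sub_le _ _ _
    _ ≤ F * (2 / ((n : ℝ) - 1) * (1 + 2 / ((m : ℝ) - 1)) + 2 / ((m : ℝ) - 1))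
          + (ε + 2 * F / δ ^ 2 * (x * (1 - x) / n + y * (1 - y) / m)) :=
        add_le_add (abs_bivB_sub_bivB_zero_le hl hF hn hm hx hy)
          (abs_bivB_zero_sub_le hδ hF hmod (by omega) (by omega) hx hy)
    _ ≤ F * (2 / ((n : ℝ) - 1) * (1 + 2 / ((m : ℝ) - 1)) + 2 / ((m : ℝ) - 1))
          + (ε + 2 * F / δ ^ 2 * (1 / n + 1 / m)) := by
        gcongr
        · nlinarith [hx.1, hx.2]
        · nlinarith [hy.1, hy.2]
    _ = _ := by ring

end Estimates

theorem tendstoUniformlyOn_bivB {lam : ℝ} (hl : |lam| ≤ 1) {f : ℝ → ℝ → ℝ}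
    (hf : ContinuousOn (uncurry f) (𝕀 ×ˢ 𝕀)) :
    TendstoUniformlyOn (fun p : ℕ × ℕ => fun z : ℝ × ℝ => bivB p.1 p.2 lam f z.1 z.2)
      (uncurry f) (atTop ×ˢ atTop) (𝕀 ×ˢ 𝕀) := by
  have hcpt : IsCompact (𝕀 ×ˢ 𝕀) := isCompact_Icc.prod isCompact_Icc
  obtain ⟨F, hF⟩ := hcpt.exists_bound_of_continuousOn hf
  simp only [Real.norm_eq_abs] at hF
  rw [Metric.tendstoUniformlyOn_iff]
  intro ε hε
  obtain ⟨δ, hδ, hmod⟩ := Metric.uniformContinuousOn_iff_le.1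
    (hcpt.uniformContinuousOn_of_continuous hf) (ε / 2) (half_pos hε)
  have hinv : Tendsto (fun n : ℕ => 1 / (n : ℝ)) atTop (𝓝 0) :=
    tendsto_one_div_atTop_nhds_zero_nat
  have hinv' : Tendsto (fun n : ℕ => 2 / ((n : ℝ) - 1)) atTop (𝓝 0) :=
    tendsto_const_nhds.div_atTop
      (tendsto_atTop_add_const_right _ (-1) tendsto_natCast_atTop_atTop)
  have hbound : Tendsto (fun p : ℕ × ℕ =>
      ε / 2 + 2 * F / δ ^ 2 * (1 / (p.1 : ℝ) + 1 / (p.2 : ℝ))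
      + F * (2 / ((p.1 : ℝ) - 1) * (1 + 2 / ((p.2 : ℝ) - 1)) + 2 / ((p.2 : ℝ) - 1)))
      (atTop ×ˢ atTop) (𝓝 (ε / 2 + 2 * F / δ ^ 2 * (0 + 0) + F * (0 * (1 + 0) + 0))) :=
    (tendsto_const_nhds.add (tendsto_const_nhds.mul
      ((hinv.comp tendsto_fst).add (hinv.comp tendsto_snd)))).add
    (tendsto_const_nhds.mul (((hinv'.comp tendsto_fst).mul
      (tendsto_const_nhds.add (hinv'.comp tendsto_snd))).add (hinv'.comp tendsto_snd)))
  rw [show ε / 2 + 2 * F / δ ^ 2 * (0 + 0) + F * (0 * (1 + 0) + 0) = ε / 2 by ring] at hbound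
  filter_upwards [hbound.eventually (gt_mem_nhds (half_lt_self hε)),
    tendsto_fst.eventually (eventually_ge_atTop 2), tendsto_snd.eventually (eventually_ge_atTop 2)]
    with p hp hn hm
  rintro ⟨x, y⟩ ⟨hx, hy⟩
  rw [dist_comm, Real.dist_eq]
  exact (abs_bivB_sub_le hl hδ hF hmod hn hm hx hy).trans_lt hp

theorem tendsto_sSup_abs_sub_div_of_tendstoUniformlyOn {ι : Type*} {l : Filter ι}
    {G : ι → ℝ → ℝ → ℝ} {g w : ℝ → ℝ → ℝ} {A B : Set ℝ}
    (hG : TendstoUniformlyOn (fun p z => G p z.1 z.2) (uncurry g) l (A ×ˢ B))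
    (hw : ∀ x ∈ A, ∀ y ∈ B, 1 ≤ w x y) :
    Tendsto (fun p => sSup {r | ∃ x ∈ A, ∃ y ∈ B, r = |G p x y - g x y| / w x y}) l (𝓝 0) := by
  rw [Metric.tendsto_nhds]
  intro ε hε
  filter_upwards [Metric.tendstoUniformlyOn_iff.1 hG (ε / 2) (half_pos hε)] with p hp
  have hle : sSup {r | ∃ x ∈ A, ∃ y ∈ B, r = |G p x y - g x y| / w x y} ≤ ε / 2 := by
    refine Real.sSup_le ?_ (half_pos hε).le
    rintro r ⟨x, hx, y, hy, rfl⟩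
    calc |G p x y - g x y| / w x y ≤ |G p x y - g x y| :=
          div_le_self (abs_nonneg _) (hw x hx y hy)
      _ ≤ ε / 2 := by
        rw [abs_sub_comm, ← Real.dist_eq]
        exact (hp (x, y) ⟨hx, hy⟩).le
  have hnonneg : 0 ≤ sSup {r | ∃ x ∈ A, ∃ y ∈ B, r = |G p x y - g x y| / w x y} := by
    refine Real.sSup_nonneg fun r ⟨x, hx, y, hy, hr⟩ => ?_
    exact hr ▸ div_nonneg (abs_nonneg _) (zero_le_one.trans (hw x hx y hy))
  rw [Real.dist_eq, sub_zero, abs_of_nonneg hnonneg]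
  linarith

theorem bivB_weighted_convergence_general (lam : ℝ) (hlam : lam ∈ Set.Icc (-1 : ℝ) 1)
    (f : ℝ → ℝ → ℝ)
    (hf : ContinuousOn (Function.uncurry f) (Set.Icc (0 : ℝ) 1 ×ˢ Set.Icc (0 : ℝ) 1)) :
    Filter.Tendsto
      (fun p : ℕ × ℕ =>
        sSup {r | ∃ x ∈ Set.Icc (0 : ℝ) 1, ∃ y ∈ Set.Icc (0 : ℝ) 1,
          r = |bivB p.1 p.2 lam f x y - f x y| / (x ^ 2 + y ^ 2 + 1)})
      (Filter.atTop ×ˢ Filter.atTop) (nhds 0) := by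
  have hw : ∀ x ∈ 𝕀, ∀ y ∈ 𝕀, 1 ≤ x ^ 2 + y ^ 2 + 1 :=
    fun x _ y _ => le_add_of_nonneg_left (by positivity)
  exact (tendsto_sSup_abs_sub_div_of_tendstoUniformlyOn
    (tendstoUniformlyOn_bivB (abs_le.2 hlam) hf) hw :)

/-- convergence of the bivariate λ-Bernstein operators in the weighted
norm `‖g‖_ρ = sup_{(x,y)∈I} |g(x,y)|/ρ(x,y)` with weight `ρ(x,y) = x² + y² + 1`. -/
theorem bivB_weighted_convergence (lam : ℝ) (hlam : lam ∈ Set.Icc (-1 : ℝ) 1)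
    (f : ℝ → ℝ → ℝ)
    (hf : ContinuousOn (Function.uncurry f) (Set.Icc (0 : ℝ) 1 ×ˢ Set.Icc (0 : ℝ) 1))
    (M : ℝ) (hM : 0 < M)
    (hbound : ∀ x ∈ Set.Icc (0 : ℝ) 1, ∀ y ∈ Set.Icc (0 : ℝ) 1,
      |f x y| ≤ M * (x ^ 2 + y ^ 2 + 1)) :
    Filter.Tendsto
      (fun p : ℕ × ℕ =>
        sSup {r | ∃ x ∈ Set.Icc (0 : ℝ) 1, ∃ y ∈ Set.Icc (0 : ℝ) 1,
          r = |bivB p.1 p.2 lam f x y - f x y| / (x ^ 2 + y ^ 2 + 1)})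
      (Filter.atTop ×ˢ Filter.atTop) (nhds 0) :=
  bivB_weighted_convergence_general lam hlam f hf
end
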